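/- arXiv:2308.03918 — 3 statements merged into one kernel-verified Lean document; each statement's English description precedes it below -/
import Mathlib

section
/- Let A ∈ ℝ^{n×n} be Hurwitz (all eigenvalues have negative real part), and let U ∈ ℝ^{n×n} be such that V := ∫₀^∞ e^{tA} U e^{tAᵀ} dt is invertible. Then for every λ ∈ ℝ, writing G(iλ) := (iλ I_n - A)^{-1} and G(iλ)* := (-iλ I_n - Aᵀ)^{-1}, one has G(iλ) U G(iλ)* = V G(iλ)* V^{-1} U V^{-1} G(iλ) V. -/
/-!
Since `A` is Hurwitz, `e^{tA}` decays exponentially: on the generalized eigenspace of an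
eigenvalue `μ` it acts as `e^{tμ}` times a polynomial in `t`. Hence `V` is an absolutely
convergent integral, and integrating
`d/dt (e^{tA} U e^{tAᵀ}) = A e^{tA} U e^{tAᵀ} + e^{tA} U e^{tAᵀ} Aᵀ` over `(0, ∞)` gives the
Lyapunov equation `A V + V Aᵀ = -U`. With `X = iλ - A` and `Y = -iλ - Aᵀ` it reads
`U = X V + V Y`, and then both sides of the identity equal `V Y⁻¹ + X⁻¹ V`.
-/

open Matrix MeasureTheory
open NormedSpace Asymptotics Filter Finset Set
open scoped Nat

section Resolvent
variable {ι R : Type*} [Fintype ι] [DecidableEq ι] [CommRing R]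

theorem Matrix.isUnit_det_smul_one_sub {M : Matrix ι ι R} {μ : R} (h : μ ∉ spectrum R M) :
    IsUnit (μ • 1 - M).det := by
  rw [← isUnit_iff_isUnit_det, ← Algebra.algebraMap_eq_smul_one]
  exact spectrum.notMem_iff.mp h

theorem Matrix.spectrum_transpose (M : Matrix ι ι R) : spectrum R Mᵀ = spectrum R M := by
  ext μ
  simp only [spectrum.mem_iff, Algebra.algebraMap_eq_smul_one, isUnit_iff_isUnit_det]
  rw [← det_transpose, transpose_sub, transpose_smul, transpose_one, transpose_transpose]

theorem Matrix.inv_mul_mul_inv_eq_of_eq_mul_add_mul {X Y V U : Matrix ι ι R} (hX : IsUnit X.det)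
    (hY : IsUnit Y.det) (hV : IsUnit V.det) (hU : U = X * V + V * Y) :
    X⁻¹ * U * Y⁻¹ = V * Y⁻¹ * V⁻¹ * U * V⁻¹ * X⁻¹ * V :=
  calc X⁻¹ * U * Y⁻¹ = V * Y⁻¹ + X⁻¹ * V := by
        simp only [hU, mul_add, add_mul, mul_assoc, nonsing_inv_mul_cancel_left _ _ hX,
          mul_nonsing_inv _ hY, mul_one, add_comm]
    _ = V * Y⁻¹ * V⁻¹ * U * V⁻¹ * X⁻¹ * V := by
        simp only [hU, mul_add, add_mul, mul_assoc, nonsing_inv_mul_cancel_left _ _ hV,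
          nonsing_inv_mul_cancel_left _ _ hY, mul_nonsing_inv_cancel_left _ _ hX,
          nonsing_inv_mul _ hV, mul_nonsing_inv _ hV, mul_one, one_mul]

end Resolvent

section OperatorNorm
open scoped Matrix.Norms.Operator
variable {ι : Type*} [Fintype ι] [DecidableEq ι]

theorem Matrix.exp_smul_one (z : ℂ) : exp (z • (1 : Matrix ι ι ℂ)) = Complex.exp z • 1 := by
  rw [← Algebra.algebraMap_eq_smul_one, ← Algebra.algebraMap_eq_smul_one, Complex.exp_eq_exp_ℂ]
  exact (algebraMap_exp_comm z).symm

theorem Matrix.exp_mulVec_eq_sum_of_pow_mulVec_eq_zero (N : Matrix ι ι ℂ) {K : ℕ} {v : ι → ℂ}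
    (hv : (N ^ K) *ᵥ v = 0) :
    exp N *ᵥ v = ∑ k ∈ range K, (k !⁻¹ : ℂ) • (N ^ k *ᵥ v) := by
  have hsum : HasSum (fun k => ((k !⁻¹ : ℂ) • N ^ k) *ᵥ v) (exp N *ᵥ v) :=
    (exp_series_hasSum_exp' N).map (mulVec.addMonoidHomLeft v)
      (continuous_id.matrix_mulVec continuous_const)
  simp only [smul_mulVec] at hsum
  refine hsum.unique (hasSum_sum_of_ne_finset_zero fun k hk => ?_)
  rw [← Nat.sub_add_cancel (not_lt.mp (mem_range.not.mp hk)), pow_add, ← mulVec_mulVec, hv,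
    mulVec_zero, smul_zero]

theorem Matrix.exp_smul_mulVec_of_pow_mulVec_eq_zero (B : Matrix ι ι ℂ) (μ z : ℂ) {K : ℕ}
    {v : ι → ℂ} (hv : ((B - μ • 1) ^ K) *ᵥ v = 0) :
    exp (z • B) *ᵥ v =
      Complex.exp (z * μ) • ∑ k ∈ range K, (z ^ k / k ! : ℂ) • ((B - μ • 1) ^ k *ᵥ v) := by
  have hsplit : z • B = (z * μ) • (1 : Matrix ι ι ℂ) + z • (B - μ • 1) := by
    rw [smul_sub, smul_smul, add_sub_cancel]
  have hcomm : Commute ((z * μ) • (1 : Matrix ι ι ℂ)) (z • (B - μ • 1)) :=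
    ((Commute.one_left _).smul_left _).smul_right _
  have hzv : ((z • (B - μ • 1)) ^ K) *ᵥ v = 0 := by rw [smul_pow, smul_mulVec, hv, smul_zero]
  rw [hsplit, Matrix.exp_add_of_commute _ _ hcomm, Matrix.exp_smul_one, smul_mul_assoc, one_mul,
    smul_mulVec, Matrix.exp_mulVec_eq_sum_of_pow_mulVec_eq_zero _ hzv]
  congr 1
  refine sum_congr rfl fun k _ => ?_
  rw [smul_pow, smul_mulVec, smul_smul, div_eq_inv_mul]

theorem Matrix.exp_map_algebraMap (A : Matrix ι ι ℝ) :
    (exp A).map (algebraMap ℝ ℂ) = exp (A.map (algebraMap ℝ ℂ)) :=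
  map_exp (algebraMap ℝ ℂ).mapMatrix (continuous_id.matrix_map Complex.continuous_ofReal) A

/- `HasDerivAt` only depends on the topology, so this also holds for the entrywise sup norm
used below. -/
theorem Matrix.hasDerivAt_exp_smul_mul_mul_exp_smul (A U B : Matrix ι ι ℝ) (t : ℝ) :
    HasDerivAt (fun s : ℝ => exp (s • A) * U * exp (s • B))
      (A * exp (t • A) * U * exp (t • B) + exp (t • A) * U * (exp (t • B) * B)) t :=
  ((hasDerivAt_exp_smul_const' A t).mul_const U).mul (hasDerivAt_exp_smul_const B t)

end OperatorNorm

theorem isBigO_ofReal_pow_div_factorial_smul_exp {E : Type*} [NormedAddCommGroup E]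
    [NormedSpace ℂ E] (k : ℕ) (w : E) {δ : ℝ} (hδ : 0 < δ) :
    (fun t : ℝ => ((t : ℂ) ^ k / k ! : ℂ) • w) =O[atTop] fun t => Real.exp (δ * t) := by
  refine IsBigO.trans (IsBigO.of_norm_eventuallyLE ?_)
    ((isLittleO_pow_exp_pos_mul_atTop k hδ).isBigO.const_mul_left (‖w‖ / k !))
  filter_upwards [eventually_ge_atTop 0] with t ht
  rw [norm_smul, norm_div, norm_pow, Complex.norm_real, Real.norm_of_nonneg ht,
    Complex.norm_natCast]
  exact le_of_eq (by ring)

theorem Set.Finite.exists_pos_forall_re_lt_neg {s : Set ℂ} (hs : s.Finite)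
    (h : ∀ μ ∈ s, μ.re < 0) : ∃ ε > 0, ∀ μ ∈ s, μ.re < -ε := by
  rcases s.eq_empty_or_nonempty with rfl | hne
  · exact ⟨1, one_pos, by simp⟩
  obtain ⟨μ₀, hμ₀, hmax⟩ := s.exists_max_image Complex.re hs hne
  exact ⟨-μ₀.re / 2, by linarith [h μ₀ hμ₀], fun μ hμ => by linarith [hmax μ hμ, h μ₀ hμ₀]⟩

attribute [local instance] Matrix.normedAddCommGroup Matrix.normedSpace

theorem Asymptotics.IsBigO.matrix_mul {α m n p R : Type*} [Fintype m] [Fintype n] [Fintype p]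
    [NormedRing R] {l : Filter α} {X : α → Matrix m n R} {Y : α → Matrix n p R} {f g : α → ℝ}
    (hX : X =O[l] f) (hY : Y =O[l] g) : (fun x => X x * Y x) =O[l] fun x => f x * g x := by
  refine isBigO_pi.mpr fun i => isBigO_pi.mpr fun j => ?_
  simp only [mul_apply]
  exact IsBigO.fun_sum fun k _ =>
    (isBigO_pi.mp (isBigO_pi.mp hX i) k).mul (isBigO_pi.mp (isBigO_pi.mp hY k) j)

section Decay
variable {ι : Type*} [Fintype ι] [DecidableEq ι]

theorem Matrix.isBigO_exp_smul_mulVec_of_pow_mulVec_eq_zero (B : Matrix ι ι ℂ) {μ : ℂ} {ε : ℝ}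
    (hμ : μ.re < -ε) {K : ℕ} {v : ι → ℂ} (hv : ((B - μ • 1) ^ K) *ᵥ v = 0) :
    (fun t : ℝ => exp (t • B) *ᵥ v) =O[atTop] fun t => Real.exp (-ε * t) := by
  have hδ : 0 < -μ.re - ε := by linarith
  have hexp : (fun t : ℝ => Complex.exp (t * μ)) =O[atTop] fun t => Real.exp (μ.re * t) :=
    IsBigO.of_norm_le fun t => by rw [Complex.norm_exp, Complex.re_ofReal_mul, mul_comm]
  have hpoly := IsBigO.sum fun k (_ : k ∈ range K) =>
    isBigO_ofReal_pow_div_factorial_smul_exp k ((B - μ • 1) ^ k *ᵥ v) hδ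
  refine (hexp.smul hpoly).congr' ?_ ?_
  · filter_upwards with t
    simp [← Complex.coe_smul, Matrix.exp_smul_mulVec_of_pow_mulVec_eq_zero B μ t hv]
  · filter_upwards with t
    rw [smul_eq_mul, ← Real.exp_add]
    ring_nf

theorem Matrix.isBigO_exp_smul_mulVec {B : Matrix ι ι ℂ} {ε : ℝ}
    (hB : ∀ μ ∈ spectrum ℂ B, μ.re < -ε) (v : ι → ℂ) :
    (fun t : ℝ => exp (t • B) *ᵥ v) =O[atTop] fun t => Real.exp (-ε * t) := by
  have hv : v ∈ ⨆ μ, Module.End.maxGenEigenspace (toLinAlgEquiv' B) μ := by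
    rw [Module.End.iSup_maxGenEigenspace_eq_top]; trivial
  induction hv using Submodule.iSup_induction' with
  | mem μ x hx =>
    obtain ⟨K, hK⟩ := (Module.End.mem_maxGenEigenspace _ _ _).mp hx
    have hKx : ((B - μ • 1) ^ K) *ᵥ x = 0 := by
      rwa [← toLinAlgEquiv'_apply, map_pow, map_sub, map_smul, map_one]
    by_cases hμ : μ ∈ spectrum ℂ B
    · exact isBigO_exp_smul_mulVec_of_pow_mulVec_eq_zero B (hB μ hμ) hKx
    · suffices x = 0 by simpa only [this, mulVec_zero] using isBigO_zero _ _
      have hμ' : ¬ Module.End.HasEigenvalue (toLinAlgEquiv' B) μ := by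
        rwa [Module.End.hasEigenvalue_iff_mem_spectrum, AlgEquiv.spectrum_eq]
      by_contra hx0
      exact hμ' (Module.End.hasEigenvalue_of_hasGenEigenvalue (k := K)
        ((Submodule.ne_bot_iff _).mpr ⟨x, Module.End.mem_genEigenspace_nat.mpr hK, hx0⟩))
  | zero => simpa only [mulVec_zero] using isBigO_zero _ _
  | add x y _ _ hx hy => simpa only [mulVec_add] using hx.add hy

theorem Matrix.isBigO_exp_smul {B : Matrix ι ι ℂ} {ε : ℝ}
    (hB : ∀ μ ∈ spectrum ℂ B, μ.re < -ε) :
    (fun t : ℝ => exp (t • B)) =O[atTop] fun t => Real.exp (-ε * t) := by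
  refine isBigO_pi.mpr fun i => isBigO_pi.mpr fun j => ?_
  simpa [mulVec_single] using isBigO_pi.mp (isBigO_exp_smul_mulVec hB (Pi.single j 1)) i

theorem Matrix.exists_pos_isBigO_exp_smul (A : Matrix ι ι ℝ)
    (hA : ∀ μ ∈ spectrum ℂ (A.map (algebraMap ℝ ℂ)), μ.re < 0) :
    ∃ ε > 0, (fun t : ℝ => exp (t • A)) =O[atTop] fun t => Real.exp (-ε * t) := by
  obtain ⟨ε, hε, hre⟩ := (Matrix.finite_spectrum _).exists_pos_forall_re_lt_neg hA
  refine ⟨ε, hε, ((isBigO_exp_smul hre).norm_left.congr_left fun t => ?_).of_norm_left⟩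
  have hmap : t • A.map (algebraMap ℝ ℂ) = (t • A).map (algebraMap ℝ ℂ) := by
    ext; simp [Complex.real_smul]
  rw [hmap, ← exp_map_algebraMap, norm_map_eq _ _ (norm_algebraMap' ℂ)]

theorem Matrix.integral_exp_smul_mul_mul_exp_smul_sylvester (A U B : Matrix ι ι ℝ) {ε : ℝ}
    (hε : 0 < ε) (hA : (fun t : ℝ => exp (t • A)) =O[atTop] fun t => Real.exp (-ε * t))
    (hB : (fun t : ℝ => exp (t • B)) =O[atTop] fun t => Real.exp (-ε * t)) :
    A * (∫ t in Ioi (0 : ℝ), exp (t • A) * U * exp (t • B)) +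
      (∫ t in Ioi (0 : ℝ), exp (t • A) * U * exp (t • B)) * B = -U := by
  -- The sup-norm topology is the product topology only up to unfolding, so instance search
  -- cannot find the `ContinuousENorm` that integrability needs.
  let : ContinuousENorm (Matrix ι ι ℝ) := SeminormedAddGroup.toContinuousENorm
  set g : ℝ → Matrix ι ι ℝ := fun t => exp (t • A) * U * exp (t • B)
  let L : Matrix ι ι ℝ →L[ℝ] Matrix ι ι ℝ :=
    LinearMap.toContinuousLinearMap (LinearMap.mulLeft ℝ A + LinearMap.mulRight ℝ B)
  have hderiv (t : ℝ) : HasDerivAt g (L (g t)) t := by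
    convert hasDerivAt_exp_smul_mul_mul_exp_smul A U B t using 1
    simp [L, g, mul_assoc]
  have hcont : Continuous g := continuous_iff_continuousAt.mpr fun t => (hderiv t).continuousAt
  have hdecay : g =O[atTop] fun t => Real.exp (-(2 * ε) * t) := by
    refine ((hA.matrix_mul (isBigO_const_const U one_ne_zero atTop)).matrix_mul hB).congr_right
      fun t => ?_
    rw [mul_one, ← Real.exp_add]
    ring_nf
  have hint : IntegrableOn g (Ioi 0) :=
    ((hcont.locallyIntegrable.locallyIntegrableOn (Ici 0)).integrableOn_of_isBigO_atTop hdecay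
      ⟨Ioi 0, Ioi_mem_atTop 0, exp_neg_integrableOn_Ioi 0 (by positivity)⟩).mono_set
      Ioi_subset_Ici_self
  have hlim : Tendsto g atTop (nhds 0) := hdecay.trans_tendsto <|
    Real.tendsto_exp_atBot.comp (tendsto_id.const_mul_atTop_of_neg (by linarith))
  have hftc := integral_Ioi_of_hasDerivAt_of_tendsto hcont.continuousWithinAt
    (fun t _ => hderiv t) (L.integrable_comp hint) hlim
  have hL := (L.integral_comp_comm hint).symm.trans hftc
  simp only [g, zero_smul, exp_zero, mul_one, one_mul, zero_sub] at hL
  exact hL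

end Decay

/-- for Hurwitz `A ∈ ℝ^{n×n}` and `U ∈ ℝ^{n×n}` such that
`V := ∫₀^∞ e^{tA} U e^{tAᵀ} dt` is invertible, the resolvents
`G(iλ) = (iλI - A)⁻¹`, `G(iλ)* = (-iλI - Aᵀ)⁻¹` satisfy
`G(iλ) U G(iλ)* = V G(iλ)* V⁻¹ U V⁻¹ G(iλ) V` for all `λ ∈ ℝ`. -/
theorem stmt10 (n : ℕ) (A U : Matrix (Fin n) (Fin n) ℝ)
    (hA : ∀ μ ∈ spectrum ℂ (A.map (algebraMap ℝ ℂ)), μ.re < 0)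
    (V : Matrix (Fin n) (Fin n) ℝ)
    (hV : V = ∫ t in Set.Ioi (0 : ℝ),
      NormedSpace.exp (t • A) * U * NormedSpace.exp (t • Aᵀ))
    (hVinv : IsUnit V.det) :
    ∀ l : ℝ,
      let Ac := A.map (algebraMap ℝ ℂ)
      let Uc := U.map (algebraMap ℝ ℂ)
      let Vc := V.map (algebraMap ℝ ℂ)
      let G := ((Complex.I * l) • (1 : Matrix (Fin n) (Fin n) ℂ) - Ac)⁻¹
      let Gs := ((-(Complex.I * l)) • (1 : Matrix (Fin n) (Fin n) ℂ) - Acᵀ)⁻¹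
      G * Uc * Gs = Vc * Gs * Vc⁻¹ * Uc * Vc⁻¹ * G * Vc := by
  intro l Ac Uc Vc G Gs
  obtain ⟨ε, hε, hdecay⟩ := exists_pos_isBigO_exp_smul A hA
  have hdecayT : (fun t : ℝ => exp (t • Aᵀ)) =O[atTop] fun t => Real.exp (-ε * t) :=
    (hdecay.norm_left.congr_left fun t => by
      rw [← transpose_smul, exp_transpose, norm_transpose]).of_norm_left
  have hlyap : A * V + V * Aᵀ = -U :=
    hV ▸ integral_exp_smul_mul_mul_exp_smul_sylvester A U Aᵀ hε hdecay hdecayT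
  have hlyapC : Ac * Vc + Vc * Acᵀ = -Uc := by
    have h := congrArg (algebraMap ℝ ℂ).mapMatrix hlyap
    simp only [map_add, map_neg, RingHom.mapMatrix_apply, map_mul, transpose_map] at h
    exact h
  have hre (s : ℝ) : Complex.I * s ∉ spectrum ℂ Ac := fun h => (hA _ h).ne (by simp)
  have hUc : Uc = ((Complex.I * l) • 1 - Ac) * Vc + Vc * ((-(Complex.I * l)) • 1 - Acᵀ) := by
    rw [← neg_neg Uc, ← hlyapC]
    simp only [sub_mul, mul_sub, Matrix.smul_mul, Matrix.mul_smul, one_mul, mul_one]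
    module
  refine inv_mul_mul_inv_eq_of_eq_mul_add_mul (isUnit_det_smul_one_sub (hre l)) ?_ ?_ hUc
  · refine isUnit_det_smul_one_sub ?_
    simpa [spectrum_transpose] using hre (-l)
  · have hVc := hVinv.map (algebraMap ℝ ℂ)
    rwa [RingHom.map_det] at hVc
end

section
/- Let Θ ∈ ℝ^{n×n} and J ∈ ℝ^{m×m} be antisymmetric, R ∈ ℝ^{n×n} symmetric, and M ∈ ℝ^{m×n} arbitrary. Define A := 2Θ(R + MᵀJM) and B := 2ΘMᵀ. Then the physical realizability identity A Θ + Θ Aᵀ + B J Bᵀ = 0 holds. -/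
/-! Write `S = R + MᵀJM`. Antisymmetry of `Θ` gives `AΘ + ΘAᵀ = 2Θ(S - Sᵀ)Θ`, in which only
the antisymmetric part of `S` survives: `S - Sᵀ = 2MᵀJM`. The noise term
`BJBᵀ = 4ΘMᵀJMΘᵀ = -4ΘMᵀJMΘ` cancels the resulting `4ΘMᵀJMΘ` exactly. -/

open Matrix

namespace Matrix

variable {ι κ α : Type*} [CommRing α]

theorem mul_mul_add_mul_transpose_of_transpose_eq_neg [Fintype ι] {Θ : Matrix ι ι α}
    (hΘ : Θᵀ = -Θ) (S : Matrix ι ι α) : Θ * S * Θ + Θ * (Θ * S)ᵀ = Θ * (S - Sᵀ) * Θ := by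
  rw [transpose_mul, hΘ]
  noncomm_ring

theorem add_transpose_mul_mul_sub_transpose [Fintype κ] {R : Matrix ι ι α} {J : Matrix κ κ α}
    (hR : Rᵀ = R) (hJ : Jᵀ = -J) (M : Matrix κ ι α) :
    R + Mᵀ * J * M - (R + Mᵀ * J * M)ᵀ = (2 : α) • (Mᵀ * J * M) := by
  rw [transpose_add, transpose_mul, transpose_mul, hR, hJ, transpose_transpose, two_smul]
  simp only [Matrix.neg_mul, Matrix.mul_neg, Matrix.mul_assoc]
  abel

theorem mul_mul_transpose_of_transpose_eq_neg [Fintype ι] [Fintype κ] {Θ : Matrix ι ι α}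
    (hΘ : Θᵀ = -Θ) (J : Matrix κ κ α) (M : Matrix κ ι α) :
    Θ * Mᵀ * J * (Θ * Mᵀ)ᵀ = -(Θ * (Mᵀ * J * M) * Θ) := by
  rw [transpose_mul, hΘ, transpose_transpose]
  simp only [Matrix.mul_neg, Matrix.mul_assoc]

end Matrix

/-- physical realizability identity. For antisymmetric `Θ`, `J`,
symmetric `R` and arbitrary `M`, the matrices `A = 2Θ(R + MᵀJM)` and `B = 2ΘMᵀ`
satisfy `AΘ + ΘAᵀ + BJBᵀ = 0`. -/
theorem stmt15 (n m : ℕ) (Θ : Matrix (Fin n) (Fin n) ℝ) (J : Matrix (Fin m) (Fin m) ℝ)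
    (R : Matrix (Fin n) (Fin n) ℝ) (M : Matrix (Fin m) (Fin n) ℝ)
    (hΘ : Θᵀ = -Θ) (hJ : Jᵀ = -J) (hR : Rᵀ = R) :
    let A := (2 : ℝ) • (Θ * (R + Mᵀ * J * M))
    let B := (2 : ℝ) • (Θ * Mᵀ)
    A * Θ + Θ * Aᵀ + B * J * Bᵀ = 0 := by
  intro A B
  have hA : A * Θ + Θ * Aᵀ = (4 : ℝ) • (Θ * (Mᵀ * J * M) * Θ) := by
    simp only [A, transpose_smul, Matrix.smul_mul, Matrix.mul_smul, ← smul_add,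
      mul_mul_add_mul_transpose_of_transpose_eq_neg hΘ, add_transpose_mul_mul_sub_transpose hR hJ,
      smul_smul]
    norm_num
  have hB : B * J * Bᵀ = -(4 : ℝ) • (Θ * (Mᵀ * J * M) * Θ) := by
    simp only [B, transpose_smul, Matrix.smul_mul, Matrix.mul_smul, smul_smul,
      mul_mul_transpose_of_transpose_eq_neg hΘ]
    module
  rw [hA, hB, neg_smul, add_neg_cancel]
end

section
/- Define sequences of n×n matrices by β₀ = I_n, and for k ≥ 0: γ_k antisymmetric-or-symmetric data given recursively by γ_k = L(α_k Π^{δ_{k1}} γ_{k-1}), α_{k+1} = γ_k β_k, β_{k+1} = γ_k^{-1} α_k Π^{δ_{k1}} γ_{k-1} γ_k^{-1}, with initial α₁ = γ₀ = Θ (antisymmetric, invertible), β₁ = Θ^{-1} 𝝸 Θ^{-1} where 𝝸 is antisymmetric, Π is symmetric positive semidefinite, and L(U) := ∫₀^∞ e^{tA} U e^{tAᵀ} dt for a Hurwitz A. Assuming each γ_k is invertible, the matrices satisfy β_kᵀ = (-1)^k β_k and γ_kᵀ = -(-1)^k γ_k for all k ≥ 0. -/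
open Matrix MeasureTheory

attribute [local instance] Matrix.normedAddCommGroup Matrix.normedSpace

/-!
Write `M_k = α_k Π^{δ_{k1}} γ_{k-1}`, so that `γ_k = L(M_k)`. Since `L` commutes with
transposition and with scalars, `γ_k` has the symmetry type of `M_k`. The recursions read
`β_{k+1} = γ_k⁻¹ M_k γ_k⁻¹` and `M_{k+1} = γ_k β_k γ_k`: congruences by a symmetric or
antisymmetric matrix, which preserve the symmetry type of the middle factor. Starting from
`M_1 = Θ Π Θ` symmetric and `β_1` antisymmetric, the signs alternate by induction.
-/

namespace Matrix

section Congruence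

variable {ι R : Type*} [Fintype ι] [DecidableEq ι] [CommRing R]

theorem inv_smul_of_mul_self_eq_one {s : R} (hs : s * s = 1) (X : Matrix ι ι R) :
    (s • X)⁻¹ = s • X⁻¹ := by
  by_cases hX : IsUnit X.det
  · exact inv_eq_left_inv (by rw [smul_mul_smul_comm, hs, one_smul, nonsing_inv_mul _ hX])
  · have hsX : ¬IsUnit (s • X).det := by
      rw [det_smul]
      exact fun h ↦ hX (isUnit_of_mul_isUnit_right h)
    rw [nonsing_inv_apply_not_isUnit _ hX, nonsing_inv_apply_not_isUnit _ hsX, smul_zero]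

theorem transpose_nonsing_inv_of_transpose_eq_smul {s : R} (hs : s * s = 1)
    {X : Matrix ι ι R} (hX : Xᵀ = s • X) : X⁻¹ᵀ = s • X⁻¹ := by
  rw [transpose_nonsing_inv, hX, inv_smul_of_mul_self_eq_one hs]

theorem transpose_mul_mul_self_of_transpose_eq_smul {s t : R} (hs : s * s = 1)
    {X Y : Matrix ι ι R} (hX : Xᵀ = s • X) (hY : Yᵀ = t • Y) :
    (X * Y * X)ᵀ = t • (X * Y * X) := by
  rw [transpose_mul, transpose_mul, hX, hY, smul_mul_smul_comm, smul_mul_smul_comm,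
    ← mul_assoc, mul_right_comm s t s, hs, one_mul, mul_assoc]

end Congruence

section Lyapunov

variable {ι : Type*} [Fintype ι] [DecidableEq ι]

noncomputable def lyapunovIntegral (A U : Matrix ι ι ℝ) : Matrix ι ι ℝ :=
  ∫ t in Set.Ioi (0 : ℝ), NormedSpace.exp (t • A) * U * NormedSpace.exp (t • Aᵀ)

theorem transpose_lyapunovIntegral (A U : Matrix ι ι ℝ) :
    (lyapunovIntegral A U)ᵀ = lyapunovIntegral A Uᵀ := by
  let T : Matrix ι ι ℝ ≃L[ℝ] Matrix ι ι ℝ :=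
    (transposeLinearEquiv ι ι ℝ ℝ).toContinuousLinearEquiv
  refine (T.integral_comp_comm _).symm.trans ?_
  congr 1 with t : 1
  change (NormedSpace.exp (t • A) * U * NormedSpace.exp (t • Aᵀ))ᵀ = _
  rw [transpose_mul, transpose_mul, ← exp_transpose, ← exp_transpose, transpose_smul,
    transpose_smul, transpose_transpose, mul_assoc]

theorem lyapunovIntegral_smul (A U : Matrix ι ι ℝ) (c : ℝ) :
    lyapunovIntegral A (c • U) = c • lyapunovIntegral A U := by
  simp only [lyapunovIntegral, mul_smul_comm, smul_mul_assoc, integral_smul]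

theorem transpose_lyapunovIntegral_of_transpose_eq_smul (A : Matrix ι ι ℝ)
    {U : Matrix ι ι ℝ} {c : ℝ} (hU : Uᵀ = c • U) :
    (lyapunovIntegral A U)ᵀ = c • lyapunovIntegral A U := by
  rw [transpose_lyapunovIntegral, hU, lyapunovIntegral_smul]

end Lyapunov

section Recursion

variable {ι R : Type*} [Fintype ι] [DecidableEq ι] [CommRing R]

theorem transpose_eq_neg_one_pow_smul_of_recursion
    (L : Matrix ι ι R → Matrix ι ι R)
    (hL : ∀ U (c : R), Uᵀ = c • U → (L U)ᵀ = c • L U)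
    (β γ M : ℕ → Matrix ι ι R) (hγ : ∀ k, 1 ≤ k → γ k = L (M k))
    (hβ : ∀ k, 1 ≤ k → β (k + 1) = (γ k)⁻¹ * M k * (γ k)⁻¹)
    (hM : ∀ k, 1 ≤ k → M (k + 1) = γ k * β k * γ k)
    (hβ1 : (β 1)ᵀ = -β 1) (hM1 : (M 1)ᵀ = M 1) (k : ℕ) (hk : 1 ≤ k) :
    (β k)ᵀ = (-1 : R) ^ k • β k ∧ (γ k)ᵀ = -(-1 : R) ^ k • γ k := by
  have sign_sq (k : ℕ) : -(-1 : R) ^ k * -(-1) ^ k = 1 := by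
    rw [neg_mul_neg, ← mul_pow, neg_one_mul, neg_neg, one_pow]
  have hγM (k : ℕ) (hk : 1 ≤ k) (h : (M k)ᵀ = -(-1 : R) ^ k • M k) :
      (γ k)ᵀ = -(-1 : R) ^ k • γ k := by
    rw [hγ k hk]
    exact hL _ _ h
  suffices key : (β k)ᵀ = (-1 : R) ^ k • β k ∧ (M k)ᵀ = -(-1 : R) ^ k • M k from
    ⟨key.1, hγM k hk key.2⟩
  induction k, hk using Nat.le_induction with
  | base => simpa [hM1] using hβ1
  | succ k hk ih =>
    have hγk := hγM k hk ih.2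
    rw [hβ k hk, hM k hk, pow_succ, mul_neg_one, neg_neg]
    exact ⟨transpose_mul_mul_self_of_transpose_eq_smul (sign_sq k)
        (transpose_nonsing_inv_of_transpose_eq_smul (sign_sq k) hγk) ih.2,
      transpose_mul_mul_self_of_transpose_eq_smul (sign_sq k) hγk ih.1⟩

end Recursion

end Matrix

theorem stmt19_general (n : ℕ) (A Θ Mho Pi : Matrix (Fin n) (Fin n) ℝ)
    (hΘ : Θᵀ = -Θ)
    (hMho : Mhoᵀ = -Mho) (hPi : Piᵀ = Pi)
    (L : Matrix (Fin n) (Fin n) ℝ → Matrix (Fin n) (Fin n) ℝ)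
    (hL : ∀ U, L U = ∫ t in Set.Ioi (0 : ℝ),
      NormedSpace.exp (t • A) * U * NormedSpace.exp (t • Aᵀ))
    (α β γ : ℕ → Matrix (Fin n) (Fin n) ℝ)
    (hβ0 : β 0 = 1) (hα1 : α 1 = Θ) (hγ0 : γ 0 = Θ) (hβ1 : β 1 = Θ⁻¹ * Mho * Θ⁻¹)
    (hγ : ∀ k, 1 ≤ k →
      γ k = L (α k * (if k = 1 then Pi else 1) * γ (k - 1)))
    (hα : ∀ k, 1 ≤ k → α (k + 1) = γ k * β k)
    (hβ : ∀ k, 1 ≤ k →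
      β (k + 1) = (γ k)⁻¹ * α k * (if k = 1 then Pi else 1) * γ (k - 1) * (γ k)⁻¹) :
    ∀ k : ℕ, (β k)ᵀ = ((-1 : ℝ) ^ k) • β k ∧ (γ k)ᵀ = -(((-1 : ℝ) ^ k) • γ k) := by
  obtain rfl : L = lyapunovIntegral A := funext hL
  have hΘ' : Θᵀ = (-1 : ℝ) • Θ := by rw [hΘ, neg_one_smul]
  have hβ1' : (β 1)ᵀ = -β 1 := by
    rw [hβ1, ← neg_one_smul ℝ (_ * _)]
    exact transpose_mul_mul_self_of_transpose_eq_smul (by norm_num)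
      (transpose_nonsing_inv_of_transpose_eq_smul (by norm_num) hΘ')
      (by rw [hMho, neg_one_smul])
  have hM1 : (Θ * Pi * Θ)ᵀ = Θ * Pi * Θ :=
    (transpose_mul_mul_self_of_transpose_eq_smul (by norm_num) hΘ'
      (hPi.trans (one_smul ℝ Pi).symm)).trans (one_smul ℝ _)
  have alternating := transpose_eq_neg_one_pow_smul_of_recursion (lyapunovIntegral A)
    (fun _ _ ↦ transpose_lyapunovIntegral_of_transpose_eq_smul A) β γ
    (fun k ↦ α k * (if k = 1 then Pi else 1) * γ (k - 1)) hγ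
    (fun k hk ↦ by simp only [hβ k hk, mul_assoc])
    (fun k hk ↦ by
      simp only [hα k hk, if_neg (show k + 1 ≠ 1 by omega), add_tsub_cancel_right, mul_one])
    hβ1' (by simpa [hα1, hγ0] using hM1)
  rintro (_ | k)
  · simp [hβ0, hγ0, hΘ]
  · obtain ⟨hβk, hγk⟩ := alternating (k + 1) k.succ_pos
    exact ⟨hβk, by rw [hγk, neg_smul]⟩

/-- with `L(U) = ∫₀^∞ e^{tA} U e^{tAᵀ} dt` (A Hurwitz), `Θ`, `𝝸`
antisymmetric (`Θ` invertible), `Π` symmetric positive semidefinite, and sequences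
defined by `β₀ = I`, `α₁ = γ₀ = Θ`, `β₁ = Θ⁻¹ 𝝸 Θ⁻¹`,
`γ_k = L(α_k Π^{δ_{k1}} γ_{k-1})`, `α_{k+1} = γ_k β_k`,
`β_{k+1} = γ_k⁻¹ α_k Π^{δ_{k1}} γ_{k-1} γ_k⁻¹` (each `γ_k` invertible), one has
`β_kᵀ = (-1)^k β_k` and `γ_kᵀ = -(-1)^k γ_k` for all `k ≥ 0`. -/
theorem stmt19 (n : ℕ) (A Θ Mho Pi : Matrix (Fin n) (Fin n) ℝ)
    (hA : ∀ μ ∈ spectrum ℂ (A.map (algebraMap ℝ ℂ)), μ.re < 0)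
    (hΘ : Θᵀ = -Θ) (hΘinv : IsUnit Θ.det)
    (hMho : Mhoᵀ = -Mho) (hPi : Piᵀ = Pi) (hPiPSD : Pi.PosSemidef)
    (L : Matrix (Fin n) (Fin n) ℝ → Matrix (Fin n) (Fin n) ℝ)
    (hL : ∀ U, L U = ∫ t in Set.Ioi (0 : ℝ),
      NormedSpace.exp (t • A) * U * NormedSpace.exp (t • Aᵀ))
    (α β γ : ℕ → Matrix (Fin n) (Fin n) ℝ)
    (hβ0 : β 0 = 1) (hα1 : α 1 = Θ) (hγ0 : γ 0 = Θ) (hβ1 : β 1 = Θ⁻¹ * Mho * Θ⁻¹)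
    (hγ : ∀ k, 1 ≤ k →
      γ k = L (α k * (if k = 1 then Pi else 1) * γ (k - 1)))
    (hα : ∀ k, 1 ≤ k → α (k + 1) = γ k * β k)
    (hβ : ∀ k, 1 ≤ k →
      β (k + 1) = (γ k)⁻¹ * α k * (if k = 1 then Pi else 1) * γ (k - 1) * (γ k)⁻¹)
    (hγinv : ∀ k, 1 ≤ k → IsUnit (γ k).det) :
    ∀ k : ℕ, (β k)ᵀ = ((-1 : ℝ) ^ k) • β k ∧ (γ k)ᵀ = -(((-1 : ℝ) ^ k) • γ k) :=
  stmt19_general n A Θ Mho Pi hΘ hMho hPi L hL α β γ hβ0 hα1 hγ0 hβ1 hγ hα hβ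
end
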